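/- arXiv:1704.06091 — 4 statements merged into one kernel-verified Lean document; each statement's English description precedes it below -/
import Mathlib

section
/- For K > 0 and N < −1, the function u(x) = sinh(√(K/(1−N))·x) satisfies u''(x) − ψ'(x)u'(x) = −(KN/(N−1))·u(x) for all x ∈ ℝ, where ψ(x) = (1−N)·log(cosh(√(K/(1−N))·x)). -/
open Real

theorem deriv_sinh_const_mul (a : ℝ) :
    deriv (fun x => sinh (a * x)) = fun x => a * cosh (a * x) := by
  funext x
  rw [(hasDerivAt_const_mul (x := x) a).sinh.deriv, mul_comm]

theorem deriv_const_mul_cosh_const_mul (a x : ℝ) :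
    deriv (fun x => a * cosh (a * x)) x = a ^ 2 * sinh (a * x) := by
  rw [((hasDerivAt_const_mul (x := x) a).cosh.const_mul a).deriv]
  ring

theorem deriv_const_mul_log_cosh_const_mul (a c x : ℝ) :
    deriv (fun x => c * log (cosh (a * x))) x = c * a * tanh (a * x) := by
  rw [(((hasDerivAt_const_mul (x := x) a).cosh.log (cosh_pos _).ne').const_mul c).deriv,
    tanh_eq_sinh_div_cosh]
  ring

theorem deriv_deriv_sinh_sub_deriv_log_cosh_mul (a c x : ℝ) :
    deriv (deriv fun x => sinh (a * x)) x
        - deriv (fun x => c * log (cosh (a * x))) x * deriv (fun x => sinh (a * x)) x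
      = a ^ 2 * (1 - c) * sinh (a * x) := by
  rw [deriv_sinh_const_mul, deriv_const_mul_cosh_const_mul,
    deriv_const_mul_log_cosh_const_mul, tanh_eq_sinh_div_cosh]
  field_simp [(cosh_pos (a * x)).ne']

theorem stmt_6 (K N : ℝ) (hK : 0 < K) (hN : N < -1)
    (u ψ : ℝ → ℝ)
    (hu : u = fun x => Real.sinh (Real.sqrt (K / (1 - N)) * x))
    (hψ : ψ = fun x => (1 - N) * Real.log (Real.cosh (Real.sqrt (K / (1 - N)) * x))) :
    ∀ x : ℝ, deriv (deriv u) x - deriv ψ x * deriv u x = -(K * N / (N - 1)) * u x := by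
  intro x
  subst hu hψ
  have hsq : sqrt (K / (1 - N)) ^ 2 = K / (1 - N) := sq_sqrt (div_pos hK (by linarith)).le
  rw [deriv_deriv_sinh_sub_deriv_log_cosh_mul, hsq]
  field_simp [show 1 - N ≠ 0 by linarith, show N - 1 ≠ 0 by linarith]
  ring
end

section
/- For K > 0 and N ∈ [−1, 0), the function u(x) = sinh(√(K/(1−N))·x) is NOT square-integrable with respect to the measure cosh(√(K/(1−N))·x)^{N−1}dx on ℝ. -/
/-! Since `sinh² = cosh² - 1` and `cosh ≥ 1`, for `p ≥ -2` we get
`sinh² · cosh^p ≥ sinh² · cosh⁻² = 1 - cosh⁻²`. With `a ≠ 0` this bounds the integrand by the positive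
constant `1 - cosh(a)⁻²` on `[1, ∞)`, a set of infinite measure. -/

open MeasureTheory Real Set

lemma Real.one_sub_inv_cosh_sq_le_sinh_sq_mul_cosh_rpow {p : ℝ} (hp : -2 ≤ p) (x : ℝ) :
    1 - (cosh x ^ 2)⁻¹ ≤ sinh x ^ 2 * cosh x ^ p := by
  have hcosh : 0 < cosh x ^ 2 := pow_pos (cosh_pos x) 2
  have hrpow : (cosh x ^ 2)⁻¹ ≤ cosh x ^ p := by
    calc (cosh x ^ 2)⁻¹ = cosh x ^ (-2 : ℝ) := by
          rw [rpow_neg (cosh_pos x).le, rpow_two]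
      _ ≤ cosh x ^ p := rpow_le_rpow_of_exponent_le (one_le_cosh x) hp
  calc 1 - (cosh x ^ 2)⁻¹ = sinh x ^ 2 * (cosh x ^ 2)⁻¹ := by
        rw [sinh_sq, sub_mul, mul_inv_cancel₀ hcosh.ne', one_mul]
    _ ≤ sinh x ^ 2 * cosh x ^ p := mul_le_mul_of_nonneg_left hrpow (sq_nonneg _)

lemma Real.not_integrable_sinh_sq_mul_cosh_rpow {a p : ℝ} (ha : a ≠ 0) (hp : -2 ≤ p) :
    ¬ Integrable (fun x : ℝ => sinh (a * x) ^ 2 * cosh (a * x) ^ p) := by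
  intro hint
  set ε := 1 - (cosh a ^ 2)⁻¹
  have hε : 0 < ε := by
    have : 1 < cosh a ^ 2 := one_lt_pow₀ (one_lt_cosh.mpr ha) two_ne_zero
    simpa [ε] using inv_lt_one_of_one_lt₀ this
  have hIci : Ici (1 : ℝ) ⊆ {x | ε ≤ ‖sinh (a * x) ^ 2 * cosh (a * x) ^ p‖} := by
    intro x (hx : 1 ≤ x)
    have hcosh : cosh a ≤ cosh (a * x) := by
      rw [cosh_le_cosh, abs_mul]
      exact le_mul_of_one_le_right (abs_nonneg a) (hx.trans (le_abs_self x))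
    calc ε ≤ 1 - (cosh (a * x) ^ 2)⁻¹ :=
          sub_le_sub_left (inv_anti₀ (pow_pos (cosh_pos a) 2)
            (pow_le_pow_left₀ (cosh_pos a).le hcosh 2)) 1
      _ ≤ sinh (a * x) ^ 2 * cosh (a * x) ^ p :=
          one_sub_inv_cosh_sq_le_sinh_sq_mul_cosh_rpow hp _
      _ ≤ _ := le_norm_self _
  have := (measure_mono hIci).trans_lt (hint.measure_norm_ge_lt_top hε)
  simp [volume_Ici] at this

theorem stmt_8 (K N : ℝ) (hK : 0 < K) (hN1 : -1 ≤ N) (hN0 : N < 0) :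
    ¬ MeasureTheory.Integrable
      (fun x : ℝ => (Real.sinh (Real.sqrt (K / (1 - N)) * x)) ^ 2 *
        Real.cosh (Real.sqrt (K / (1 - N)) * x) ^ (N - 1)) := by
  have ha : Real.sqrt (K / (1 - N)) ≠ 0 := (sqrt_pos.mpr (div_pos hK (by linarith))).ne'
  exact not_integrable_sinh_sq_mul_cosh_rpow ha (by linarith)
end

section
/- Let K > 0 and N < −1, and let u : ℝ → ℝ be a nonconstant smooth function with u(0) = 0 satisfying u''(t) − ψ'(t)u'(t) = −(KN/(N−1))u(t) and u''(t) = (K/(1−N))u(t) for all t (the 1-dimensional Hessian equation). Then ψ'(t) = √(K(1−N))·tanh(√(K/(1−N))·t) for all t, and hence ψ(t) = (1−N)log(cosh(√(K/(1−N))t)) + ψ(0). -/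
/-!
Subtracting the two equations gives `ψ' u' = K u`. With `a = √(K/(1-N))` the second equation is
`u'' = a² u`, so `u(0) = 0` forces `a u = u'(0) sinh (a t)` and `u' = u'(0) cosh (a t)`, which never
vanishes; dividing yields `ψ' = (K / a) tanh (a t)`, and integrating `tanh` gives `log cosh`.
-/

open Real

lemma eq_apply_zero_of_hasDerivAt_zero {f : ℝ → ℝ} (hf : ∀ t, HasDerivAt f 0 t) (t : ℝ) :
    f t = f 0 :=
  is_const_of_deriv_eq_zero (fun s => (hf s).differentiableAt) (fun s => (hf s).deriv) t 0

/-- Solutions of `u'' = a² u`; the first identity carries a factor `a` so that `a = 0` is allowed. -/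
theorem eq_cosh_sinh_of_hasDerivAt_sq_mul {u u' : ℝ → ℝ} {a : ℝ}
    (hu : ∀ t, HasDerivAt u (u' t) t) (hu' : ∀ t, HasDerivAt u' (a ^ 2 * u t) t) (t : ℝ) :
    a * u t = a * u 0 * cosh (a * t) + u' 0 * sinh (a * t) ∧
      u' t = u' 0 * cosh (a * t) + a * u 0 * sinh (a * t) := by
  have hlin : ∀ s, HasDerivAt (fun s => a * s) a s := fun s => by
    simpa using (hasDerivAt_id s).const_mul a
  have hsinh : ∀ s, HasDerivAt (fun s => sinh (a * s)) (cosh (a * s) * a) s :=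
    fun s => (hasDerivAt_sinh (a * s)).comp s (hlin s)
  have hcosh : ∀ s, HasDerivAt (fun s => cosh (a * s)) (sinh (a * s) * a) s :=
    fun s => (hasDerivAt_cosh (a * s)).comp s (hlin s)
  -- Wronskians of `u` against the solutions `sinh (a ·)` and `cosh (a ·)` are constant.
  have hW₁ := eq_apply_zero_of_hasDerivAt_zero
    (f := fun s => u' s * sinh (a * s) - a * u s * cosh (a * s))
    (fun s => by
      refine ((hu' s).mul (hsinh s)).sub (((hu s).const_mul a).mul (hcosh s)) |>.congr_deriv ?_
      ring) t
  have hW₂ := eq_apply_zero_of_hasDerivAt_zero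
    (f := fun s => u' s * cosh (a * s) - a * u s * sinh (a * s))
    (fun s => by
      refine ((hu' s).mul (hcosh s)).sub (((hu s).const_mul a).mul (hsinh s)) |>.congr_deriv ?_
      ring) t
  simp only [mul_zero, sinh_zero, cosh_zero] at hW₁ hW₂
  have hpyth := cosh_sq_sub_sinh_sq (a * t)
  constructor
  · linear_combination sinh (a * t) * hW₂ - cosh (a * t) * hW₁ - a * u t * hpyth
  · linear_combination cosh (a * t) * hW₂ - sinh (a * t) * hW₁ - u' t * hpyth

theorem eq_mul_log_cosh_of_deriv_eq_mul_tanh {ψ : ℝ → ℝ} {a b : ℝ} (hψ : Differentiable ℝ ψ)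
    (h : ∀ t, deriv ψ t = b * a * tanh (a * t)) (t : ℝ) :
    ψ t = b * log (cosh (a * t)) + ψ 0 := by
  have hconst := eq_apply_zero_of_hasDerivAt_zero
    (f := fun s => ψ s - b * log (cosh (a * s)))
    (fun s => by
      have hlog : HasDerivAt (fun s => log (cosh (a * s))) (sinh (a * s) * a / cosh (a * s)) s :=
        (((hasDerivAt_id s).const_mul a).cosh.congr_deriv (by simp)).log (cosh_pos _).ne'
      refine ((hψ s).hasDerivAt.sub (hlog.const_mul b)).congr_deriv ?_
      rw [h s, tanh_eq_sinh_div_cosh]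
      ring) t
  simp only [mul_zero, cosh_zero, log_one] at hconst
  linarith

theorem stmt_11 (K N : ℝ) (hK : 0 < K) (hN : N < -1)
    (u ψ : ℝ → ℝ) (hu : ContDiff ℝ 2 u) (hψ : ContDiff ℝ 1 ψ)
    (hu0 : u 0 = 0) (hu'0 : deriv u 0 ≠ 0)
    (hode1 : ∀ t : ℝ, deriv (deriv u) t - deriv ψ t * deriv u t = -(K * N / (N - 1)) * u t)
    (hode2 : ∀ t : ℝ, deriv (deriv u) t = (K / (1 - N)) * u t) :
    (∀ t : ℝ, deriv ψ t = Real.sqrt (K * (1 - N)) * Real.tanh (Real.sqrt (K / (1 - N)) * t)) ∧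
    (∀ t : ℝ, ψ t =
      (1 - N) * Real.log (Real.cosh (Real.sqrt (K / (1 - N)) * t)) + ψ 0) := by
  have h1N : 0 < 1 - N := by linarith
  set a := √(K / (1 - N)) with ha_def
  have ha : 0 < a := sqrt_pos.mpr (by positivity)
  have ha2 : a ^ 2 = K / (1 - N) := sq_sqrt (by positivity)
  have hKa : √(K * (1 - N)) = (1 - N) * a := by
    rw [ha_def, show K * (1 - N) = (1 - N) ^ 2 * (K / (1 - N)) by field_simp,
      sqrt_mul (sq_nonneg _), sqrt_sq h1N.le]
  have hdu : ∀ t, HasDerivAt u (deriv u t) t :=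
    fun t => (hu.differentiable two_ne_zero t).hasDerivAt
  have hddu : ∀ t, HasDerivAt (deriv u) (a ^ 2 * u t) t := fun t => by
    rw [ha2, ← hode2 t]
    exact ((hu.iterate_deriv' 1 1).differentiable one_ne_zero t).hasDerivAt
  have hsol := eq_cosh_sinh_of_hasDerivAt_sq_mul hdu hddu
  simp only [hu0, mul_zero, zero_mul, zero_add, add_zero] at hsol
  have hKa2 : K = (1 - N) * a ^ 2 := by rw [ha2]; field_simp
  have hψu : ∀ t, deriv ψ t * deriv u t = K * u t := fun t => by
    have hcoeff : K / (1 - N) + K * N / (N - 1) = K := by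
      field_simp [show N - 1 ≠ 0 by linarith]
      ring
    linear_combination hode2 t - hode1 t + u t * hcoeff
  have hderivψ : ∀ t, deriv ψ t = (1 - N) * a * tanh (a * t) := fun t => by
    rw [tanh_eq_sinh_div_cosh, mul_div_assoc', eq_div_iff (cosh_pos _).ne']
    apply mul_left_cancel₀ (mul_ne_zero ha.ne' hu'0)
    linear_combination a * hψu t - a * deriv ψ t * (hsol t).2 + K * (hsol t).1 +
      deriv u 0 * sinh (a * t) * hKa2
  exact ⟨fun t => by rw [hderivψ, hKa],
    eq_mul_log_cosh_of_deriv_eq_mul_tanh (hψ.differentiable one_ne_zero) hderivψ⟩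
end

section
/- On the upper half-plane with hyperbolic metric g = (dx²+dy²)/y² and weight ψ(x,y) = −(2−N)log y for N < 0, the weighted Ricci tensor Ric_N = Ric_g + Hess ψ − (dψ⊗dψ)/(2−N) equals (1−N)·g; explicitly, the matrix −y^{-2}Id + Hess ψ + (dψ⊗dψ)/(2−N) equals ((1−N)/y²)·Id at every point (x,y). -/
/-!
With `c = 2 - N` the weight `ψ = -c log y` has `∂ₓψ = 0`, `∂ᵧψ = -c / y` and `∂ᵧ²ψ = c / y²`.
The Christoffel corrections on the diagonal are `Γʸₓₓ = 1 / y` and `Γʸᵧᵧ = -1 / y`, so the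
covariant Hessian is `c · diag(y⁻², 0)`, while `dψ ⊗ dψ / c` is `diag(0, c y⁻²)`. Adding `-y⁻² Id` gives `(c - 1) / y² = (1 - N) / y²` on the diagonal.
-/

theorem deriv_const_mul_log (c : ℝ) : deriv (fun b => c * Real.log b) = fun b => c / b := by
  rw [deriv_const_mul_field', Real.deriv_log']
  exact funext fun b => (div_eq_mul_inv c b).symm

theorem neg_div_mul_neg_div_div_self (c y : ℝ) : -c / y * (-c / y) / c = c / y ^ 2 := by
  rw [div_mul_div_comm, neg_mul_neg, div_div, mul_comm (y * y), ← div_div, mul_self_div_self, sq]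

theorem stmt_17_general (N x y : ℝ)
    (ψ : ℝ → ℝ → ℝ) (hψ : ψ = fun _ b => -(2 - N) * Real.log b)
    (ψx ψy ψxx ψxy ψyy : ℝ)
    (hψx : ψx = deriv (fun a => ψ a y) x)
    (hψy : ψy = deriv (fun b => ψ x b) y)
    (hψxx : ψxx = deriv (fun a => deriv (fun a' => ψ a' y) a) x)
    (hψxy : ψxy = deriv (fun b => deriv (fun a => ψ a b) x) y)
    (hψyy : ψyy = deriv (fun b => deriv (fun b' => ψ x b') b) y) :
    -(1 / y ^ 2) + (ψxx - (1 / y) * ψy) + ψx * ψx / (2 - N) = (1 - N) / y ^ 2 ∧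
    (ψxy - (-(1 / y)) * ψx) + ψx * ψy / (2 - N) = 0 ∧
    -(1 / y ^ 2) + (ψyy - (-(1 / y)) * ψy) + ψy * ψy / (2 - N) = (1 - N) / y ^ 2 := by
  subst hψ hψx hψy hψxx hψxy hψyy
  simp only [deriv_const, deriv_const_mul_log, deriv_const_div_id]
  refine ⟨by ring, by ring, ?_⟩
  rw [neg_div_mul_neg_div_div_self]
  ring

theorem stmt_17 (N x y : ℝ) (hN : N < 0) (hy : 0 < y)
    (ψ : ℝ → ℝ → ℝ) (hψ : ψ = fun _ b => -(2 - N) * Real.log b)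
    (ψx ψy ψxx ψxy ψyy : ℝ)
    (hψx : ψx = deriv (fun a => ψ a y) x)
    (hψy : ψy = deriv (fun b => ψ x b) y)
    (hψxx : ψxx = deriv (fun a => deriv (fun a' => ψ a' y) a) x)
    (hψxy : ψxy = deriv (fun b => deriv (fun a => ψ a b) x) y)
    (hψyy : ψyy = deriv (fun b => deriv (fun b' => ψ x b') b) y) :
    -(1 / y ^ 2) + (ψxx - (1 / y) * ψy) + ψx * ψx / (2 - N) = (1 - N) / y ^ 2 ∧
    (ψxy - (-(1 / y)) * ψx) + ψx * ψy / (2 - N) = 0 ∧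
    -(1 / y ^ 2) + (ψyy - (-(1 / y)) * ψy) + ψy * ψy / (2 - N) = (1 - N) / y ^ 2 :=
  stmt_17_general N x y ψ hψ ψx ψy ψxx ψxy ψyy hψx hψy hψxx hψxy hψyy
end
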